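/- arXiv:1803.10091 — 2 statements merged into one kernel-verified Lean document; each statement's English description precedes it below -/
import Mathlib

section
/- Let O be any operator mapping volumetric functions to volumetric functions, O : (ℝ³ → ℝ) → (ℝ³ → ℝ). For a point cloud x : Fin n → ℝ³ define the point cloud operator O_x[f] = R_x[ O(E_x[f]) ], i.e., O_x[f]_i = O(E_x[f])(x_i). Then O_x is permutation equivariant: for every permutation π of Fin n and every f : Fin n → ℝ, O_{x∘π}[f∘π] = (O_x[f]) ∘ π. -/
open Real

/-- Gaussian radial basis function `Φ_σ(r) = exp(−r²/(2σ²))`. -/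
noncomputable def Phi (σ r : ℝ) : ℝ := Real.exp (-r ^ 2 / (2 * σ ^ 2))

/-- The weight `ω_i = 1 / (c · Σ_{i'} Φ_σ(‖x_{i'} − x_i‖))` with `c = 1/(2πσ²)`. -/
noncomputable def omegaWeight {n : ℕ} (σ : ℝ) (x : Fin n → EuclideanSpace ℝ (Fin 3))
    (i : Fin n) : ℝ :=
  1 / ((1 / (2 * Real.pi * σ ^ 2)) * ∑ i', Phi σ ‖x i' - x i‖)

/-- Extension operator `E_x[f](p) = c · Σ_i ω_i f_i Φ_σ(‖p − x_i‖)`, `c = 1/(2πσ²)`. -/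
noncomputable def extOp {n : ℕ} (σ : ℝ) (x : Fin n → EuclideanSpace ℝ (Fin 3))
    (f : Fin n → ℝ) (p : EuclideanSpace ℝ (Fin 3)) : ℝ :=
  (1 / (2 * Real.pi * σ ^ 2)) * ∑ i, omegaWeight σ x i * f i * Phi σ ‖p - x i‖

/-- Restriction (sampling) operator: `R_x[ψ]_i = ψ(x_i)`. -/
def restrictOp {n : ℕ} (x : Fin n → EuclideanSpace ℝ (Fin 3))
    (ψ : EuclideanSpace ℝ (Fin 3) → ℝ) : Fin n → ℝ :=
  fun i => ψ (x i)

/-- The point cloud operator `O_x[f] = R_x[O(E_x[f])]` induced by a volumetric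
operator `O` via the extension/restriction mechanism. -/
noncomputable def pointCloudOp {n : ℕ} (σ : ℝ)
    (O : (EuclideanSpace ℝ (Fin 3) → ℝ) → (EuclideanSpace ℝ (Fin 3) → ℝ))
    (x : Fin n → EuclideanSpace ℝ (Fin 3)) (f : Fin n → ℝ) : Fin n → ℝ :=
  restrictOp x (O (extOp σ x f))

/-- For any volumetric operator `O`, the induced point cloud operator `O_x`
is permutation equivariant: `O_{x∘π}[f∘π] = (O_x[f]) ∘ π`. -/
theorem pointCloudOp_perm_equivariant {n : ℕ} (σ : ℝ) (hσ : 0 < σ)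
    (O : (EuclideanSpace ℝ (Fin 3) → ℝ) → (EuclideanSpace ℝ (Fin 3) → ℝ))
    (x : Fin n → EuclideanSpace ℝ (Fin 3))
    (perm : Equiv.Perm (Fin n)) (f : Fin n → ℝ) :
    pointCloudOp σ O (x ∘ perm) (f ∘ perm) = (pointCloudOp σ O x f) ∘ perm := by
  have homega : ∀ i, omegaWeight σ (x ∘ perm) i = omegaWeight σ x (perm i) := by
    intro i
    unfold omegaWeight
    rw [Fintype.sum_equiv perm (fun i' => Phi σ ‖(x ∘ perm) i' - (x ∘ perm) i‖)
      (fun i' => Phi σ ‖x i' - x (perm i)‖) (fun j => rfl)]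
  have hext : extOp σ (x ∘ perm) (f ∘ perm) = extOp σ x f := by
    funext p
    unfold extOp
    rw [Fintype.sum_equiv perm
      (fun i => omegaWeight σ (x ∘ perm) i * (f ∘ perm) i * Phi σ ‖p - (x ∘ perm) i‖)
      (fun i => omegaWeight σ x i * f i * Phi σ ‖p - x i‖)
      (fun j => by beta_reduce; rw [homega j]; simp only [Function.comp_apply])]
  funext i
  simp only [pointCloudOp, restrictOp, hext, Function.comp_apply]
end

section
/- Closed form of the point cloud convolution: let σ > 0, c > 0, let x_1,…,x_I ∈ ℝ³ be a point cloud with weights ω_1,…,ω_I ∈ ℝ, let f ∈ ℝ^{I×J} be a point cloud function, let y_1,…,y_L ∈ ℝ³ be kernel translations, and let k ∈ ℝ^{L×J×M} be kernel coefficients. Define the extended function ψ_j(p) = c·Σ_i ω_i f_{ij} Φ_σ(‖p − x_i‖) and the kernel κ_{jm}(z) = Σ_l k_{ljm} Φ_σ(‖z − y_l‖). Then for every x ∈ ℝ³ and every output channel m, the convolution ∫_{ℝ³} Σ_j ψ_j(y)·κ_{jm}(x − y) dy = c·(πσ²)^{3/2} · Σ_{i,j,l} f_{ij} k_{ljm}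 ω_i · exp(−‖x − x_i − y_l‖²/(4σ²)). -/
/-!
By Apollonius's theorem, `‖u - a‖² + ‖u - b‖² = 2‖u - (a + b)/2‖² + ‖a - b‖²/2`, so the product of
two Gaussians of width `σ` centred at `a` and `b` is `exp (-‖a - b‖² / (4σ²))` times a Gaussian of
width `σ/√2` centred at their midpoint, whose integral over a `d`-dimensional space is `(πσ²)^{d/2}`.
The convolution is bilinear in the finite sums defining `ψ` and `κ`, and the kernel's centre
`y_l` enters as the centre `x - y_l` of the reflected Gaussian `u ↦ Φ_σ(‖x - u - y_l‖)`.
-/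

open MeasureTheory Finset

section GaussianProduct

variable {V : Type*} [NormedAddCommGroup V] [InnerProductSpace ℝ V]

lemma Phi_mul_Phi (σ : ℝ) (u a b : V) :
    Phi σ ‖u - a‖ * Phi σ ‖u - b‖ =
      Real.exp (-‖a - b‖ ^ 2 / (4 * σ ^ 2)) *
        Real.exp (-(σ ^ 2)⁻¹ * ‖u - midpoint ℝ a b‖ ^ 2) := by
  have apollonius :=
    EuclideanGeometry.dist_sq_add_dist_sq_eq_two_mul_dist_midpoint_sq_add_half_dist_sq u a b
  simp only [dist_eq_norm] at apollonius
  rw [Phi, Phi, ← Real.exp_add, ← Real.exp_add]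
  congr 1
  rcases eq_or_ne σ 0 with rfl | hσ
  · simp
  field_simp
  linear_combination (-4) * apollonius

variable [FiniteDimensional ℝ V] [MeasurableSpace V] [BorelSpace V]

theorem integral_Phi_mul_Phi {σ : ℝ} (hσ : σ ≠ 0) (a b : V) :
    ∫ u, Phi σ ‖u - a‖ * Phi σ ‖u - b‖ =
      (Real.pi * σ ^ 2) ^ (Module.finrank ℝ V / 2 : ℝ) *
        Real.exp (-‖a - b‖ ^ 2 / (4 * σ ^ 2)) := by
  simp_rw [Phi_mul_Phi, integral_const_mul]
  rw [integral_sub_right_eq_self (fun u => Real.exp (-(σ ^ 2)⁻¹ * ‖u‖ ^ 2)),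
    GaussianFourier.integral_rexp_neg_mul_sq_norm (by positivity), div_inv_eq_mul, mul_comm]

theorem integrable_Phi_mul_Phi {σ : ℝ} (hσ : σ ≠ 0) (a b : V) :
    Integrable (fun u => Phi σ ‖u - a‖ * Phi σ ‖u - b‖) :=
  Integrable.of_integral_ne_zero (by rw [integral_Phi_mul_Phi hσ]; positivity)

end GaussianProduct

theorem point_cloud_convolution_closed_form_general
    (σ c : ℝ) (hσ : 0 < σ)
    (I J L M : ℕ)
    (x : Fin I → EuclideanSpace ℝ (Fin 3)) (ω : Fin I → ℝ)
    (f : Fin I → Fin J → ℝ)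
    (y : Fin L → EuclideanSpace ℝ (Fin 3))
    (k : Fin L → Fin J → Fin M → ℝ)
    (ψ : Fin J → EuclideanSpace ℝ (Fin 3) → ℝ)
    (hψ : ∀ j p, ψ j p = c * ∑ i, ω i * f i j * Phi σ ‖p - x i‖)
    (κ : Fin J → Fin M → EuclideanSpace ℝ (Fin 3) → ℝ)
    (hκ : ∀ j m z, κ j m z = ∑ l, k l j m * Phi σ ‖z - y l‖)
    (xp : EuclideanSpace ℝ (Fin 3)) (m : Fin M) :
    ∫ yv : EuclideanSpace ℝ (Fin 3), ∑ j, ψ j yv * κ j m (xp - yv)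
      = c * (Real.pi * σ ^ 2) ^ ((3 : ℝ) / 2) *
          ∑ i, ∑ j, ∑ l,
            f i j * k l j m * ω i *
              Real.exp (-‖xp - x i - y l‖ ^ 2 / (4 * σ ^ 2)) := by
  have hκ_reflect : ∀ j u, κ j m (xp - u) = ∑ l, k l j m * Phi σ ‖u - (xp - y l)‖ := by
    intro j u
    simp only [hκ, norm_sub_rev u, sub_sub, add_comm u]
  have hintegrable := fun i l => integrable_Phi_mul_Phi hσ.ne' (x i) (xp - y l)
  have hterm : ∀ i j l, (c * ω i * f i j * k l j m) *
      ∫ u, Phi σ ‖u - x i‖ * Phi σ ‖u - (xp - y l)‖ =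
        c * (Real.pi * σ ^ 2) ^ ((3 : ℝ) / 2) *
          (f i j * k l j m * ω i * Real.exp (-‖xp - x i - y l‖ ^ 2 / (4 * σ ^ 2))) := by
    intro i j l
    rw [integral_Phi_mul_Phi hσ.ne', finrank_euclideanSpace_fin, norm_sub_rev, sub_right_comm]
    push_cast
    ring
  calc ∫ u, ∑ j, ψ j u * κ j m (xp - u)
      = ∫ u, ∑ j, ∑ l, ∑ i, (c * ω i * f i j * k l j m) *
          (Phi σ ‖u - x i‖ * Phi σ ‖u - (xp - y l)‖) := by
        congr 1; funext u
        simp only [hψ, hκ_reflect, mul_sum, mul_assoc, mul_comm, mul_left_comm]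
    _ = ∑ j, ∑ l, ∑ i, (c * ω i * f i j * k l j m) *
          ∫ u, Phi σ ‖u - x i‖ * Phi σ ‖u - (xp - y l)‖ := by
        -- `fun_prop` discharges the integrability side conditions from `hintegrable`.
        simp (disch := fun_prop) only [integral_finsetSum, integral_const_mul]
    _ = _ := by
        simp only [hterm, ← mul_sum]
        rw [sum_comm_cycle]

/-- Closed form of the point cloud convolution: convolving the extended
function `ψ_j(p) = c Σ_i ω_i f_{ij} Φ_σ(‖p − x_i‖)` with the kernel
`κ_{jm}(z) = Σ_l k_{ljm} Φ_σ(‖z − y_l‖)` gives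
`c (πσ²)^{3/2} Σ_{i,j,l} f_{ij} k_{ljm} ω_i exp(−‖x − x_i − y_l‖²/(4σ²))`. -/
theorem point_cloud_convolution_closed_form
    (σ c : ℝ) (hσ : 0 < σ) (hc : 0 < c)
    (I J L M : ℕ)
    (x : Fin I → EuclideanSpace ℝ (Fin 3)) (ω : Fin I → ℝ)
    (f : Fin I → Fin J → ℝ)
    (y : Fin L → EuclideanSpace ℝ (Fin 3))
    (k : Fin L → Fin J → Fin M → ℝ)
    (ψ : Fin J → EuclideanSpace ℝ (Fin 3) → ℝ)
    (hψ : ∀ j p, ψ j p = c * ∑ i, ω i * f i j * Phi σ ‖p - x i‖)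
    (κ : Fin J → Fin M → EuclideanSpace ℝ (Fin 3) → ℝ)
    (hκ : ∀ j m z, κ j m z = ∑ l, k l j m * Phi σ ‖z - y l‖)
    (xp : EuclideanSpace ℝ (Fin 3)) (m : Fin M) :
    ∫ yv : EuclideanSpace ℝ (Fin 3), ∑ j, ψ j yv * κ j m (xp - yv)
      = c * (Real.pi * σ ^ 2) ^ ((3 : ℝ) / 2) *
          ∑ i, ∑ j, ∑ l,
            f i j * k l j m * ω i *
              Real.exp (-‖xp - x i - y l‖ ^ 2 / (4 * σ ^ 2)) :=
  point_cloud_convolution_closed_form_general σ c hσ I J L M x ω f y k ψ hψ κ hκ xp m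
end
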